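/- arXiv:2510.14754 — 2 statements merged into one kernel-verified Lean document; each statement's English description precedes it below -/
import Mathlib

section
/- Let p ≥ 3 be prime, H = ⟨a_1, a_2, a_3⟩ ≅ (Z/pZ)^3 with a_4 := (a_1a_2a_3)^{-1}, and let Q_1* = ⟨Φ_3⟩ where Φ_3 swaps a_3 and a_4. The set of K ∈ F(p,3) invariant under Q_1* is exactly {K(l) : l = 1,...,p-1} ∪ {K((p-1)/2, (p-1)/2)}, where K(l) = ⟨a_1^l a_2^{-1}⟩ and K(r,s) = ⟨a_1^r a_2^s a_3^{-1}⟩. -/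
/-!
Since `H` is an elementary abelian `p`-group, its subgroups are `𝔽_p`-subspaces, and the
condition `H ⧸ K ≅ (ℤ/pℤ)²` says exactly that `K` is a line `⟨v⟩`. In the coordinates of
`a₁, a₂, a₃`, `Φ₃ (x, y, z) = (x - z, y - z, -z)`, and `⟨v⟩` is `Φ₃`-invariant iff `v` is an
eigenvector. Its eigenvalue is `1` with `z = 0`, giving the lines `K(l)` (`l = 0` is excluded by
`a₂ ∉ K`, and `a₁ ∉ K` excludes `⟨a₁⟩`), or `-1` with `2x = 2y = z`, giving the single line
`K((p-1)/2, (p-1)/2)`, since `2 · (p-1)/2 = -1` in `ℤ/pℤ`.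
-/

open Module

namespace AddSubgroup

section ZModModule

variable {V W : Type*} [AddCommGroup V] [AddCommGroup W]

theorem toZModSubmodule_closure {n : ℕ} [Module (ZMod n) V] (s : Set V) :
    toZModSubmodule n (closure s) = Submodule.span (ZMod n) s :=
  le_antisymm ((closure_le (Submodule.span (ZMod n) s).toAddSubgroup).2 Submodule.subset_span)
    (Submodule.span_le.2 subset_closure)

theorem mem_closure_singleton_iff_exists_smul (n : ℕ) [Module (ZMod n) V] {v x : V} :
    x ∈ closure {v} ↔ ∃ c : ZMod n, c • v = x := by
  rw [← mem_toZModSubmodule n, toZModSubmodule_closure, Submodule.mem_span_singleton]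

variable (p : ℕ) [Fact p.Prime] [Module (ZMod p) V] [Module (ZMod p) W]

theorem closure_singleton_eq_closure_singleton_iff {v w : V} :
    closure {v} = closure {w} ↔ ∃ c : (ZMod p)ˣ, c • v = w := by
  rw [← (toZModSubmodule p).injective.eq_iff, toZModSubmodule_closure, toZModSubmodule_closure,
    Submodule.span_singleton_eq_span_singleton]

theorem map_closure_singleton_eq_self_iff (f : V →+ V) (v : V) :
    (closure {v}).map f = closure {v} ↔ ∃ c : (ZMod p)ˣ, f v = c • v := by
  rw [AddMonoidHom.map_closure, Set.image_singleton, eq_comm,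
    closure_singleton_eq_closure_singleton_iff p]
  exact exists_congr fun _ => eq_comm

theorem finrank_toZModSubmodule_eq_one_iff (K : AddSubgroup V) :
    finrank (ZMod p) (toZModSubmodule p K) = 1 ↔ ∃ v ≠ 0, K = closure {v} := by
  rw [finrank_eq_one_iff']
  constructor
  · rintro ⟨⟨v, hvK⟩, hv, hspan⟩
    refine ⟨v, fun h => hv (Subtype.ext h), le_antisymm (fun w hw => ?_) ?_⟩
    · obtain ⟨c, hc⟩ := hspan ⟨w, hw⟩
      exact (mem_closure_singleton_iff_exists_smul p).2 ⟨c, congrArg Subtype.val hc⟩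
    · exact (closure_le K).2 (Set.singleton_subset_iff.2 hvK)
  · rintro ⟨v, hv, rfl⟩
    refine ⟨⟨v, subset_closure rfl⟩, fun h => hv (congrArg Subtype.val h), ?_⟩
    rintro ⟨w, hw⟩
    obtain ⟨c, rfl⟩ := (mem_closure_singleton_iff_exists_smul p).1 hw
    exact ⟨c, rfl⟩

theorem nonempty_quotient_addEquiv_iff_finrank [Module.Finite (ZMod p) V]
    [Module.Finite (ZMod p) W] (K : AddSubgroup V) :
    Nonempty (V ⧸ K ≃+ W) ↔
      finrank (ZMod p) (toZModSubmodule p K) + finrank (ZMod p) W = finrank (ZMod p) V := by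
  rw [← Submodule.finrank_quotient_add_finrank (toZModSubmodule p K), add_comm,
    Nat.add_right_cancel_iff, eq_comm, ← FiniteDimensional.nonempty_linearEquiv_iff_finrank_eq]
  -- `V ⧸ K` is definitionally the quotient by the submodule `toZModSubmodule p K`.
  exact ⟨fun ⟨e⟩ => ⟨{ e with map_smul' := ZMod.map_smul (M := V ⧸ toZModSubmodule p K) e }⟩,
    fun ⟨e⟩ => ⟨e.toAddEquiv⟩⟩

variable {p} in
theorem nonempty_quotient_addEquiv_prod_iff [Module.Finite (ZMod p) V]
    (hV : finrank (ZMod p) V = 3) (K : AddSubgroup V) :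
    Nonempty (V ⧸ K ≃+ ZMod p × ZMod p) ↔ ∃ v ≠ 0, K = closure {v} := by
  rw [nonempty_quotient_addEquiv_iff_finrank p, finrank_prod, finrank_self, hV,
    ← finrank_toZModSubmodule_eq_one_iff p]
  omega

end ZModModule

end AddSubgroup

theorem ZMod.two_mul_natCast_half_pred {p : ℕ} (hp : Odd p) :
    (2 : ZMod p) * (((p - 1) / 2 : ℕ) : ZMod p) = -1 := by
  obtain ⟨k, rfl⟩ := hp
  have hk : (2 * k + 1 - 1) / 2 = k := by omega
  rw [hk, eq_neg_iff_add_eq_zero]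
  exact_mod_cast ZMod.natCast_self (2 * k + 1)

def standardGenerators (R : Type*) [Ring R] : Fin 4 → Fin 3 → R :=
  ![![1, 0, 0], ![0, 1, 0], ![0, 0, 1], ![-1, -1, -1]]

theorem eq_standardGenerators {R : Type*} [Ring R] {a : Fin 4 → Fin 3 → R}
    (ha : ∀ j : Fin 3, a j.castSucc = Pi.single j 1) (hlast : a 3 = -(a 0 + a 1 + a 2)) :
    a = standardGenerators R := by
  have h0 : a 0 = Pi.single 0 1 := ha 0
  have h1 : a 1 = Pi.single 1 1 := ha 1
  have h2 : a 2 = Pi.single 2 1 := ha 2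
  ext j i; fin_cases j <;> fin_cases i <;> simp [standardGenerators, h0, h1, h2, hlast]

/-- `Φ₃` in the coordinates of `a₁, a₂, a₃`. -/
def swap34 {R : Type*} [Ring R] (w : Fin 3 → R) : Fin 3 → R := ![w 0 - w 2, w 1 - w 2, -w 2]

theorem AddEquiv.eq_swap34 {p : ℕ} (Φ : (Fin 3 → ZMod p) ≃+ (Fin 3 → ZMod p))
    (h0 : Φ ![1, 0, 0] = ![1, 0, 0]) (h1 : Φ ![0, 1, 0] = ![0, 1, 0])
    (h2 : Φ ![0, 0, 1] = ![-1, -1, -1]) : ⇑Φ = swap34 := by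
  funext w
  have hw : w = w 0 • ![1, 0, 0] + w 1 • ![0, 1, 0] + w 2 • ![0, 0, 1] := by
    ext i; fin_cases i <;> simp
  rw [hw, map_add, map_add, ZMod.map_smul, ZMod.map_smul, ZMod.map_smul, h0, h1, h2]
  ext i; fin_cases i <;> simp [swap34] <;> ring

theorem swap34_eq_smul {R : Type*} [CommRing R] [IsDomain R] {v : Fin 3 → R} {c : R}
    (h : swap34 v = c • v) : v 2 = 0 ∨ (2 * v 0 = v 2 ∧ 2 * v 1 = v 2) := by
  have h0 : v 0 - v 2 = c * v 0 := congrFun h 0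
  have h1 : v 1 - v 2 = c * v 1 := congrFun h 1
  have h2 : -v 2 = c * v 2 := congrFun h 2
  rcases mul_eq_zero.1 (show (c + 1) * v 2 = 0 by linear_combination -h2) with hc | hv2
  · exact Or.inr ⟨by linear_combination h0 + v 0 * hc, by linear_combination h1 + v 1 * hc⟩
  · exact Or.inl hv2

section Lines

variable {p : ℕ} [Fact p.Prime]

theorem closure_eq_of_third_eq_zero {v : Fin 3 → ZMod p} (hv : v ≠ 0) (hv2 : v 2 = 0)
    (h0 : ![1, 0, 0] ∉ AddSubgroup.closure {v}) (h1 : ![0, 1, 0] ∉ AddSubgroup.closure {v}) :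
    ∃ l ≠ 0, AddSubgroup.closure {v} = AddSubgroup.closure {![l, -1, 0]} := by
  have hv0 : v 0 ≠ 0 := by
    intro hv0
    have hv1 : v 1 ≠ 0 := fun hv1 => hv (by ext i; fin_cases i <;> simp [hv0, hv1, hv2])
    refine h1 ((AddSubgroup.mem_closure_singleton_iff_exists_smul p).2 ⟨(v 1)⁻¹, ?_⟩)
    ext i; fin_cases i <;> simp [hv0, hv2, hv1]
  have hv1 : v 1 ≠ 0 := by
    intro hv1
    refine h0 ((AddSubgroup.mem_closure_singleton_iff_exists_smul p).2 ⟨(v 0)⁻¹, ?_⟩)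
    ext i; fin_cases i <;> simp [hv1, hv2, hv0]
  refine ⟨-v 0 / v 1, by simp [hv0, hv1],
    (AddSubgroup.closure_singleton_eq_closure_singleton_iff p).2
      ⟨Units.mk0 (-(v 1)⁻¹) (by simpa using hv1), ?_⟩⟩
  ext i; fin_cases i <;> simp [hv2, hv1, div_eq_inv_mul]

theorem closure_eq_of_two_mul_eq {v : Fin 3 → ZMod p} {c : ZMod p} (hc : 2 * c = -1)
    (hv : v ≠ 0) (h0 : 2 * v 0 = v 2) (h1 : 2 * v 1 = v 2) :
    AddSubgroup.closure {v} = AddSubgroup.closure {![c, c, -1]} := by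
  have hv2 : v 2 ≠ 0 := by
    intro hv2
    have h2 : (2 : ZMod p) ≠ 0 := left_ne_zero_of_mul (hc ▸ neg_ne_zero.2 one_ne_zero)
    exact hv (by ext i; fin_cases i <;> simp_all)
  refine (AddSubgroup.closure_singleton_eq_closure_singleton_iff p).2
    ⟨Units.mk0 (-(v 2)⁻¹) (by simpa using hv2), ?_⟩
  ext i; fin_cases i <;> simp <;> field_simp
  · linear_combination (-v 0) * hc + c * h0
  · linear_combination (-v 1) * hc + c * h1

theorem standardGenerators_notMem_closure_of_ne_zero {l : ZMod p} (hl : l ≠ 0) (j : Fin 4) :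
    standardGenerators (ZMod p) j ∉ AddSubgroup.closure {![l, -1, 0]} := by
  rw [AddSubgroup.mem_closure_singleton_iff_exists_smul p]
  rintro ⟨t, ht⟩
  fin_cases j <;> simp [standardGenerators, funext_iff, Fin.forall_fin_succ] at ht
  all_goals grind

theorem standardGenerators_notMem_closure_of_two_mul_eq {c : ZMod p} (hc : 2 * c = -1)
    (j : Fin 4) : standardGenerators (ZMod p) j ∉ AddSubgroup.closure {![c, c, -1]} := by
  rw [AddSubgroup.mem_closure_singleton_iff_exists_smul p]
  rintro ⟨t, ht⟩
  fin_cases j <;> simp [standardGenerators, funext_iff, Fin.forall_fin_succ] at ht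
  all_goals grind

end Lines

theorem stmt11_general (p : ℕ) [Fact p.Prime] (hp : 3 ≤ p)
    (a : Fin 4 → (Fin 3 → ZMod p))
    (ha : ∀ j : Fin 3, a j.castSucc = Pi.single j 1)
    (hlast : a 3 = -(a 0 + a 1 + a 2))
    (Φ : (Fin 3 → ZMod p) ≃+ (Fin 3 → ZMod p))
    (hΦ0 : Φ (a 0) = a 0) (hΦ1 : Φ (a 1) = a 1)
    (hΦ2 : Φ (a 2) = a 3) :
    ∀ K : AddSubgroup (Fin 3 → ZMod p),
      ((Nonempty ((Fin 3 → ZMod p) ⧸ K ≃+ (ZMod p × ZMod p)) ∧ ∀ j, a j ∉ K) ∧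
        AddSubgroup.map Φ.toAddMonoidHom K = K) ↔
      ((∃ l : ZMod p, l ≠ 0 ∧ K = AddSubgroup.closure {l • a 0 - a 1}) ∨
       K = AddSubgroup.closure
         {(((p - 1) / 2 : ℕ) : ZMod p) • a 0 + (((p - 1) / 2 : ℕ) : ZMod p) • a 1 - a 2}) := by
  obtain rfl := eq_standardGenerators ha hlast
  have hΦ : ⇑Φ = swap34 := Φ.eq_swap34 hΦ0 hΦ1 hΦ2
  set c : ZMod p := (((p - 1) / 2 : ℕ) : ZMod p)
  have hc : 2 * c = -1 :=
    ZMod.two_mul_natCast_half_pred ((Fact.out : p.Prime).odd_of_ne_two (by omega))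
  have hKl (l : ZMod p) :
      l • standardGenerators (ZMod p) 0 - standardGenerators (ZMod p) 1 = ![l, -1, 0] := by
    ext i; fin_cases i <;> simp [standardGenerators]
  have hKcc : c • standardGenerators (ZMod p) 0 + c • standardGenerators (ZMod p) 1 -
      standardGenerators (ZMod p) 2 = ![c, c, -1] := by
    ext i; fin_cases i <;> simp [standardGenerators]
  simp only [hKl, hKcc]
  intro K
  rw [AddSubgroup.nonempty_quotient_addEquiv_prod_iff (by simp)]
  constructor
  · rintro ⟨⟨⟨v, hv, rfl⟩, hgen⟩, hinv⟩
    obtain ⟨u, hu⟩ := (AddSubgroup.map_closure_singleton_eq_self_iff p _ v).1 hinv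
    rcases swap34_eq_smul (hΦ ▸ hu) with hv2 | ⟨h0, h1⟩
    · exact Or.inl (closure_eq_of_third_eq_zero hv hv2 (hgen 0) (hgen 1))
    · exact Or.inr (closure_eq_of_two_mul_eq hc hv h0 h1)
  · rintro (⟨l, hl, rfl⟩ | rfl)
    · refine ⟨⟨⟨_, by simp, rfl⟩, standardGenerators_notMem_closure_of_ne_zero hl⟩, ?_⟩
      exact (AddSubgroup.map_closure_singleton_eq_self_iff p _ _).2 ⟨1, by simp [hΦ, swap34]⟩
    · refine ⟨⟨⟨_, by simp, rfl⟩, standardGenerators_notMem_closure_of_two_mul_eq hc⟩, ?_⟩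
      refine (AddSubgroup.map_closure_singleton_eq_self_iff p _ _).2 ⟨-1, ?_⟩
      ext i; fin_cases i <;> simp [hΦ, swap34] <;> linear_combination hc

/-- For `p ≥ 3` prime, `H = ⟨a_1,a_2,a_3⟩ ≅ (ℤ/pℤ)³` with
`a_4 := -(a_1+a_2+a_3)`, let `Φ₃` be the automorphism of `H` swapping `a_3`
and `a_4` (generating `Q₁*`).  The members of `F(p,3)` invariant under `Φ₃`
are exactly the groups `K(l) = ⟨a_1^l a_2^{-1}⟩`, `l ∈ {1,…,p-1}`, together
with `K((p-1)/2, (p-1)/2)` where `K(r,s) = ⟨a_1^r a_2^s a_3^{-1}⟩`. -/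
theorem stmt11 (p : ℕ) [Fact p.Prime] (hp : 3 ≤ p)
    (a : Fin 4 → (Fin 3 → ZMod p))
    (ha : ∀ j : Fin 3, a j.castSucc = Pi.single j 1)
    (hlast : a 3 = -(a 0 + a 1 + a 2))
    (Φ : (Fin 3 → ZMod p) ≃+ (Fin 3 → ZMod p))
    (hΦ0 : Φ (a 0) = a 0) (hΦ1 : Φ (a 1) = a 1)
    (hΦ2 : Φ (a 2) = a 3) (hΦ3 : Φ (a 3) = a 2) :
    ∀ K : AddSubgroup (Fin 3 → ZMod p),
      ((Nonempty ((Fin 3 → ZMod p) ⧸ K ≃+ (ZMod p × ZMod p)) ∧ ∀ j, a j ∉ K) ∧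
        AddSubgroup.map Φ.toAddMonoidHom K = K) ↔
      ((∃ l : ZMod p, l ≠ 0 ∧ K = AddSubgroup.closure {l • a 0 - a 1}) ∨
       K = AddSubgroup.closure
         {(((p - 1) / 2 : ℕ) : ZMod p) • a 0 + (((p - 1) / 2 : ℕ) : ZMod p) • a 1 - a 2}) :=
  stmt11_general p hp a ha hlast Φ hΦ0 hΦ1 hΦ2
end

section
/- Let H = ⟨a_1,...,a_5⟩ ≅ (Z/2Z)^5 with a_6 := a_1 a_2 a_3 a_4 a_5, and let Q* = ⟨(a_3 a_5)(a_4 a_6), (a_1 a_2)(a_3 a_4)(a_5 a_6)⟩ acting on H by permutation of a_1,...,a_6. The surjective homomorphisms θ : H → (Z/2Z)^2 with a_j ∉ ker θ for all j = 1,...,6 and ker θ invariant under Q* are exactly the four maps given on (a_1,...,a_6) by (φ_1, φ_1, φ_2, φ_2, φ_2, φ_2), (φ_1, φ_1, φ_2, φ_2, φ_1φ_2, φ_1φ_2), (φ_1, φ_1, φ_2, φ_1φ_2, φ_2, φ_1φ_2), and (φ_1, φ_1, φ_2, φ_1φ_2, φ_1φ_2, φ_2), where φ_1, φ_2 is a basis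 of (Z/2Z)^2. In particular there are exactly 4 such kernels. -/
/-!
Index the generators from `0`, so that `a₅ = a₀ + ⋯ + a₄`, and write `xⱼ = θ(aⱼ)`. Then `θ` is
determined by `x₀, …, x₄`, and since `U` and `V` permute the `aⱼ`, so are `θ ∘ U` and `θ ∘ V`. All
the conditions on `θ` thus become a finite check on `(x₀, …, x₄) ∈ ((ℤ/2ℤ)²)⁵`, decided by
evaluation. Its solutions are `x₁ = x₀`, `x₃ = s x₀ + x₂`, `x₄ = t x₀ + x₂` with `x₀, x₂` a basis,
which are the four patterns of the statement. Such a `θ` is an automorphism of `(ℤ/2ℤ)²` composed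
with the normal form `θ_{s,t} : (a₀, …, a₄) ↦ (e₁, e₁, e₂, s e₁ + e₂, t e₁ + e₂)`, so
`ker θ = ker θ_{s,t}`; the four kernels are distinct, since `a₂ + a₃ ∈ ker θ_{s,t}` iff `s = 0`
and `a₂ + a₄ ∈ ker θ_{s,t}` iff `t = 0`.
-/

theorem AddMonoidHom.ext_zmod_pi {n : ℕ} {ι M : Type*} [Finite ι] [DecidableEq ι] [AddCommGroup M]
    {f g : (ι → ZMod n) →+ M} (h : ∀ i, f (Pi.single i 1) = g (Pi.single i 1)) : f = g := by
  refine AddMonoidHom.functions_ext _ f g fun i c => ?_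
  obtain ⟨k, rfl⟩ := ZMod.intCast_surjective c
  rw [← zsmul_one, Pi.single_smul', map_zsmul, map_zsmul, h]

theorem AddSubgroup.map_equiv_eq_self_iff {G : Type*} [AddGroup G] (e : G ≃+ G)
    (K : AddSubgroup G) : K.map e.toAddMonoidHom = K ↔ K.comap e.toAddMonoidHom = K := by
  constructor <;> intro h
  · conv_lhs => rw [← h]
    exact comap_map_eq_self_of_injective e.injective K
  · conv_lhs => rw [← h]
    exact map_comap_eq_self_of_surjective e.surjective K

theorem AddSubgroup.toZModSubmodule_closure_s19 {n : ℕ} {M : Type*} [AddCommGroup M]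
    [Module (ZMod n) M] (s : Set M) :
    toZModSubmodule n (closure s) = Submodule.span (ZMod n) s :=
  (Submodule.span_le.mpr subset_closure).antisymm'
    ((closure_le (Submodule.span (ZMod n) s).toAddSubgroup).mpr Submodule.subset_span)

theorem AddSubgroup.closure_pair_eq_top_iff {n : ℕ} {M : Type*} [AddCommGroup M]
    [Module (ZMod n) M] (a b : M) :
    closure {a, b} = ⊤ ↔ ∀ y, ∃ c d : ZMod n, c • a + d • b = y := by
  simp only [eq_top_iff', ← mem_toZModSubmodule n, toZModSubmodule_closure_s19, Submodule.mem_span_pair]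

namespace QStarKernels

open Equiv

abbrev H := Fin 5 → ZMod 2
abbrev W := ZMod 2 × ZMod 2

def gen : Fin 6 → H :=
  ![Pi.single 0 1, Pi.single 1 1, Pi.single 2 1, Pi.single 3 1, Pi.single 4 1, ∑ i, Pi.single i 1]

theorem eq_gen {a : Fin 6 → H} (ha : ∀ j : Fin 5, a j.castSucc = Pi.single j 1)
    (hlast : a 5 = ∑ j : Fin 5, Pi.single j 1) : a = gen := by
  funext j
  fin_cases j
  exacts [ha 0, ha 1, ha 2, ha 3, ha 4, hlast]

def permHom (π : Perm (Fin 6)) : H →+ H :=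
  (Fintype.linearCombination (ZMod 2) fun i => gen (π i.castSucc)).toAddMonoidHom

theorem gen_castSucc (i : Fin 5) : gen i.castSucc = Pi.single i 1 := by
  fin_cases i <;> rfl

theorem permHom_single (π : Perm (Fin 6)) (i : Fin 5) :
    permHom π (Pi.single i 1) = gen (π i.castSucc) := by
  simp [permHom]

theorem permHom_gen (π : Perm (Fin 6)) {j : Fin 6} (hj : j ≠ Fin.last 5) :
    permHom π (gen j) = gen (π j) := by
  obtain ⟨i, rfl⟩ := Fin.exists_castSucc_eq.mpr hj
  rw [gen_castSucc, permHom_single]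

theorem eq_permHom {π : Perm (Fin 6)} {g : H →+ H}
    (hg : ∀ i : Fin 5, g (gen i.castSucc) = gen (π i.castSucc)) : g = permHom π :=
  AddMonoidHom.ext_zmod_pi fun i => by rw [permHom_single, ← gen_castSucc, hg]

-- The permutations `(a₃ a₅)(a₄ a₆)` and `(a₁ a₂)(a₃ a₄)(a₅ a₆)` of the statement, indexed from `0`.
def πU : Perm (Fin 6) := swap 2 4 * swap 3 5
def πV : Perm (Fin 6) := swap 0 1 * swap 2 3 * swap 4 5

def IsAdmissible (θ : H →+ W) : Prop :=
  Function.Surjective θ ∧ (∀ j, gen j ∉ θ.ker) ∧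
    θ.ker.comap (permHom πU) = θ.ker ∧ θ.ker.comap (permHom πV) = θ.ker

def comb (x₀ x₁ x₂ x₃ x₄ : W) (h₀ h₁ h₂ h₃ h₄ : ZMod 2) : W :=
  h₀ • x₀ + h₁ • x₁ + h₂ • x₂ + h₃ • x₃ + h₄ • x₄

/- The curried variables (rather than `Fin 5 → _`) and the order of the conjuncts, cheap tests
first, keep the kernel's evaluation of this `decide` down to seconds. -/
set_option synthInstance.maxSize 1000 in
theorem admissible_coords_iff (x₀ x₁ x₂ x₃ x₄ : W) :
    ((x₀ ≠ 0 ∧ x₁ ≠ 0 ∧ x₂ ≠ 0 ∧ x₃ ≠ 0 ∧ x₄ ≠ 0 ∧ x₀ + x₁ + x₂ + x₃ + x₄ ≠ 0) ∧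
      (∀ h₀ h₁ h₂ h₃ h₄ : ZMod 2, comb x₀ x₁ x₄ (x₀ + x₁ + x₂ + x₃ + x₄) x₂ h₀ h₁ h₂ h₃ h₄ = 0 ↔
        comb x₀ x₁ x₂ x₃ x₄ h₀ h₁ h₂ h₃ h₄ = 0) ∧
      (∀ h₀ h₁ h₂ h₃ h₄ : ZMod 2, comb x₁ x₀ x₃ x₂ (x₀ + x₁ + x₂ + x₃ + x₄) h₀ h₁ h₂ h₃ h₄ = 0 ↔
        comb x₀ x₁ x₂ x₃ x₄ h₀ h₁ h₂ h₃ h₄ = 0) ∧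
      ∀ y, ∃ h₀ h₁ h₂ h₃ h₄ : ZMod 2, comb x₀ x₁ x₂ x₃ x₄ h₀ h₁ h₂ h₃ h₄ = y) ↔
    x₁ = x₀ ∧ (∃ s t : ZMod 2, x₃ = s • x₀ + x₂ ∧ x₄ = t • x₀ + x₂) ∧
      ∀ y, ∃ c d : ZMod 2, c • x₀ + d • x₂ = y := by
  revert x₀ x₁ x₂ x₃ x₄
  decide +kernel

theorem apply_gen_last (f : H →+ W) :
    f (gen 5) = f (gen 0) + f (gen 1) + f (gen 2) + f (gen 3) + f (gen 4) := by
  rw [show gen 5 = ∑ i, Pi.single i 1 from rfl, map_sum, Fin.sum_univ_five]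
  rfl

theorem apply_eq_comb (f : H →+ W) (v : H) :
    f v = comb (f (gen 0)) (f (gen 1)) (f (gen 2)) (f (gen 3)) (f (gen 4))
      (v 0) (v 1) (v 2) (v 3) (v 4) := by
  have hf : f = (Fintype.linearCombination (ZMod 2) fun i => f (gen i.castSucc)).toAddMonoidHom :=
    AddMonoidHom.ext_zmod_pi fun i => by simp [gen_castSucc]
  conv_lhs => rw [hf]
  simp only [LinearMap.toAddMonoidHom_coe, Fintype.linearCombination_apply, Fin.sum_univ_five]
  rfl

theorem surjective_iff_comb (f : H →+ W) :
    Function.Surjective f ↔ ∀ y, ∃ h₀ h₁ h₂ h₃ h₄ : ZMod 2,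
      comb (f (gen 0)) (f (gen 1)) (f (gen 2)) (f (gen 3)) (f (gen 4)) h₀ h₁ h₂ h₃ h₄ = y := by
  refine forall_congr' fun y => ⟨?_, ?_⟩
  · rintro ⟨v, rfl⟩
    exact ⟨_, _, _, _, _, (apply_eq_comb f v).symm⟩
  · rintro ⟨h₀, h₁, h₂, h₃, h₄, hy⟩
    exact ⟨![h₀, h₁, h₂, h₃, h₄], (apply_eq_comb f _).trans hy⟩

theorem ker_eq_ker_iff_comb (f g : H →+ W) :
    g.ker = f.ker ↔ ∀ h₀ h₁ h₂ h₃ h₄ : ZMod 2,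
      comb (g (gen 0)) (g (gen 1)) (g (gen 2)) (g (gen 3)) (g (gen 4)) h₀ h₁ h₂ h₃ h₄ = 0 ↔
        comb (f (gen 0)) (f (gen 1)) (f (gen 2)) (f (gen 3)) (f (gen 4)) h₀ h₁ h₂ h₃ h₄ = 0 := by
  simp only [AddSubgroup.ext_iff, AddMonoidHom.mem_ker]
  refine ⟨fun h h₀ h₁ h₂ h₃ h₄ => ?_, fun h v => ?_⟩
  · have hv := h ![h₀, h₁, h₂, h₃, h₄]
    rw [apply_eq_comb g, apply_eq_comb f] at hv
    exact hv
  · rw [apply_eq_comb g v, apply_eq_comb f v]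
    exact h _ _ _ _ _

theorem forall_gen_notMem_ker_iff (f : H →+ W) :
    (∀ j, gen j ∉ f.ker) ↔ f (gen 0) ≠ 0 ∧ f (gen 1) ≠ 0 ∧ f (gen 2) ≠ 0 ∧ f (gen 3) ≠ 0 ∧
      f (gen 4) ≠ 0 ∧ f (gen 0) + f (gen 1) + f (gen 2) + f (gen 3) + f (gen 4) ≠ 0 := by
  simp [← apply_gen_last, Fin.forall_fin_succ]

theorem isAdmissible_iff (θ : H →+ W) :
    IsAdmissible θ ↔ θ (gen 1) = θ (gen 0) ∧
      (∃ s t : ZMod 2, θ (gen 3) = s • θ (gen 0) + θ (gen 2) ∧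
        θ (gen 4) = t • θ (gen 0) + θ (gen 2)) ∧
      ∀ y, ∃ c d : ZMod 2, c • θ (gen 0) + d • θ (gen 2) = y := by
  rw [← admissible_coords_iff, ← forall_gen_notMem_ker_iff, ← apply_gen_last, IsAdmissible,
    AddMonoidHom.comap_ker, AddMonoidHom.comap_ker, ker_eq_ker_iff_comb, ker_eq_ker_iff_comb,
    surjective_iff_comb, and_rotate, and_assoc]
  simp (disch := decide) only [AddMonoidHom.comp_apply, permHom_gen]
  rfl

theorem apply_gen_eq (θ : H →+ W) : (fun j => θ (gen j)) =
    ![θ (gen 0), θ (gen 1), θ (gen 2), θ (gen 3), θ (gen 4),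
      θ (gen 0) + θ (gen 1) + θ (gen 2) + θ (gen 3) + θ (gen 4)] := by
  funext j
  fin_cases j
  exacts [rfl, rfl, rfl, rfl, rfl, apply_gen_last θ]

theorem pattern_sum (x₀ x₂ : W) (s t : ZMod 2) :
    x₀ + x₀ + x₂ + (s • x₀ + x₂) + (t • x₀ + x₂) = (s + t) • x₀ + x₂ := by
  revert x₀ x₂ s t
  decide

theorem exists_pattern_iff (x₀ x₁ x₂ x₃ x₄ : W) :
    (∃ φ₁ φ₂ : W, AddSubgroup.closure {φ₁, φ₂} = ⊤ ∧
      (![x₀, x₁, x₂, x₃, x₄, x₀ + x₁ + x₂ + x₃ + x₄] = ![φ₁, φ₁, φ₂, φ₂, φ₂, φ₂] ∨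
       ![x₀, x₁, x₂, x₃, x₄, x₀ + x₁ + x₂ + x₃ + x₄] = ![φ₁, φ₁, φ₂, φ₂, φ₁ + φ₂, φ₁ + φ₂] ∨
       ![x₀, x₁, x₂, x₃, x₄, x₀ + x₁ + x₂ + x₃ + x₄] = ![φ₁, φ₁, φ₂, φ₁ + φ₂, φ₂, φ₁ + φ₂] ∨
       ![x₀, x₁, x₂, x₃, x₄, x₀ + x₁ + x₂ + x₃ + x₄] = ![φ₁, φ₁, φ₂, φ₁ + φ₂, φ₁ + φ₂, φ₂])) ↔
    x₁ = x₀ ∧ (∃ s t : ZMod 2, x₃ = s • x₀ + x₂ ∧ x₄ = t • x₀ + x₂) ∧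
      ∀ y, ∃ c d : ZMod 2, c • x₀ + d • x₂ = y := by
  simp only [Matrix.vecCons_inj, and_true, AddSubgroup.closure_pair_eq_top_iff (n := 2)]
  constructor
  · rintro ⟨φ₁, φ₂, hspan, ⟨rfl, rfl, rfl, rfl, rfl, -⟩ | ⟨rfl, rfl, rfl, rfl, rfl, -⟩ |
      ⟨rfl, rfl, rfl, rfl, rfl, -⟩ | ⟨rfl, rfl, rfl, rfl, rfl, -⟩⟩
    exacts [⟨rfl, ⟨0, 0, by simp, by simp⟩, hspan⟩, ⟨rfl, ⟨0, 1, by simp, by simp⟩, hspan⟩,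
      ⟨rfl, ⟨1, 0, by simp, by simp⟩, hspan⟩, ⟨rfl, ⟨1, 1, by simp, by simp⟩, hspan⟩]
  · rintro ⟨rfl, ⟨s, t, rfl, rfl⟩, hspan⟩
    refine ⟨x₁, x₂, hspan, ?_⟩
    rw [pattern_sum]
    have h01 : ∀ r : ZMod 2, r = 0 ∨ r = 1 := by decide
    obtain rfl | rfl := h01 s <;> obtain rfl | rfl := h01 t <;>
      simp [show (1 : ZMod 2) + 1 = 0 from rfl]

def stdHom (s t : ZMod 2) : H →+ W :=
  (Fintype.linearCombination (ZMod 2) ![(1, 0), (1, 0), (0, 1), (s, 1), (t, 1)]).toAddMonoidHom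

theorem stdHom_gen (s t : ZMod 2) (i : Fin 5) :
    stdHom s t (gen i.castSucc) = ![(1, 0), (1, 0), (0, 1), (s, 1), (t, 1)] i := by
  simp [stdHom, gen_castSucc]

theorem isAdmissible_stdHom (s t : ZMod 2) : IsAdmissible (stdHom s t) := by
  refine (isAdmissible_iff _).mpr ⟨?_, ⟨s, t, ?_, ?_⟩, fun y => ⟨y.1, y.2, ?_⟩⟩ <;>
    simp [stdHom, gen]

theorem exists_ker_eq_ker_stdHom {θ : H →+ W} (hθ : IsAdmissible θ) :
    ∃ s t, θ.ker = (stdHom s t).ker := by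
  obtain ⟨h1, ⟨s, t, h3, h4⟩, hspan⟩ := (isAdmissible_iff θ).mp hθ
  let σ : W →+ W := (LinearMap.coprod (LinearMap.toSpanSingleton (ZMod 2) W (θ (gen 0)))
    (LinearMap.toSpanSingleton (ZMod 2) W (θ (gen 2)))).toAddMonoidHom
  have hσ : Function.Surjective σ := fun y => by
    obtain ⟨c, d, hy⟩ := hspan y
    exact ⟨(c, d), hy⟩
  have hθσ : θ = σ.comp (stdHom s t) := AddMonoidHom.ext_zmod_pi fun i => by
    rw [← gen_castSucc, AddMonoidHom.comp_apply, stdHom_gen]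
    fin_cases i <;> simp [σ, h1, h3, h4]
  refine ⟨s, t, ?_⟩
  rw [hθσ, AddMonoidHom.ker_comp_of_injective _ _ (Finite.injective_iff_surjective.mpr hσ)]

theorem stdHom_ker_injective : Function.Injective fun p : W => (stdHom p.1 p.2).ker := by
  have hsum : ∀ s t : ZMod 2,
      stdHom s t (gen 2 + gen 3) = (s, 0) ∧ stdHom s t (gen 2 + gen 4) = (t, 0) := by
    intro s t
    simp [stdHom, gen, show (1 : ZMod 2) + 1 = 0 from rfl]
  have hcoord : ∀ s t s' t' : ZMod 2, ((s, 0) = (0 : W) ↔ (s', 0) = (0 : W)) →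
      ((t, 0) = (0 : W) ↔ (t', 0) = (0 : W)) → (s, t) = (s', t') := by
    decide
  rintro ⟨s, t⟩ ⟨s', t'⟩ h
  have h₃ := SetLike.ext_iff.mp h (gen 2 + gen 3)
  have h₄ := SetLike.ext_iff.mp h (gen 2 + gen 4)
  simp only [AddMonoidHom.mem_ker, (hsum _ _).1, (hsum _ _).2] at h₃ h₄
  exact hcoord s t s' t' h₃ h₄

theorem range_stdHom_ker :
    Set.range (fun p : W => (stdHom p.1 p.2).ker) = {K | ∃ θ, IsAdmissible θ ∧ K = θ.ker} := by
  ext K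
  constructor
  · rintro ⟨⟨s, t⟩, rfl⟩
    exact ⟨_, isAdmissible_stdHom s t, rfl⟩
  · rintro ⟨θ, hθ, rfl⟩
    obtain ⟨s, t, h⟩ := exists_ker_eq_ker_stdHom hθ
    exact ⟨(s, t), h.symm⟩

theorem card_admissible_kernels :
    Nat.card {K : AddSubgroup H // ∃ θ, IsAdmissible θ ∧ K = θ.ker} = 4 := by
  change Nat.card {K | ∃ θ, IsAdmissible θ ∧ K = θ.ker} = 4
  rw [← range_stdHom_ker, Nat.card_range_of_injective stdHom_ker_injective]
  simp

end QStarKernels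

open QStarKernels in
theorem stmt19_general
    (a : Fin 6 → (Fin 5 → ZMod 2))
    (ha : ∀ j : Fin 5, a j.castSucc = Pi.single j 1)
    (hlast : a 5 = ∑ j : Fin 5, Pi.single j 1)
    (U V : (Fin 5 → ZMod 2) ≃+ (Fin 5 → ZMod 2))
    (hU0 : U (a 0) = a 0) (hU1 : U (a 1) = a 1)
    (hU2 : U (a 2) = a 4) (hU4 : U (a 4) = a 2)
    (hU3 : U (a 3) = a 5)
    (hV0 : V (a 0) = a 1) (hV1 : V (a 1) = a 0)
    (hV2 : V (a 2) = a 3) (hV3 : V (a 3) = a 2)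
    (hV4 : V (a 4) = a 5) :
    (∀ θ : (Fin 5 → ZMod 2) →+ (ZMod 2 × ZMod 2),
      (Function.Surjective θ ∧ (∀ j, a j ∉ θ.ker) ∧
        AddSubgroup.map U.toAddMonoidHom θ.ker = θ.ker ∧
        AddSubgroup.map V.toAddMonoidHom θ.ker = θ.ker) ↔
      (∃ φ₁ φ₂ : ZMod 2 × ZMod 2,
        AddSubgroup.closure {φ₁, φ₂} = (⊤ : AddSubgroup (ZMod 2 × ZMod 2)) ∧
        ((fun j => θ (a j)) = ![φ₁, φ₁, φ₂, φ₂, φ₂, φ₂] ∨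
         (fun j => θ (a j)) = ![φ₁, φ₁, φ₂, φ₂, φ₁ + φ₂, φ₁ + φ₂] ∨
         (fun j => θ (a j)) = ![φ₁, φ₁, φ₂, φ₁ + φ₂, φ₂, φ₁ + φ₂] ∨
         (fun j => θ (a j)) = ![φ₁, φ₁, φ₂, φ₁ + φ₂, φ₁ + φ₂, φ₂]))) ∧
    Nat.card {K : AddSubgroup (Fin 5 → ZMod 2) //
      ∃ θ : (Fin 5 → ZMod 2) →+ (ZMod 2 × ZMod 2),
        Function.Surjective θ ∧ (∀ j, a j ∉ θ.ker) ∧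
        AddSubgroup.map U.toAddMonoidHom θ.ker = θ.ker ∧
        AddSubgroup.map V.toAddMonoidHom θ.ker = θ.ker ∧ K = θ.ker} = 4 := by
  obtain rfl := eq_gen ha hlast
  have hU : U.toAddMonoidHom = permHom πU := eq_permHom fun i => by
    fin_cases i
    exacts [hU0, hU1, hU2, hU3, hU4]
  have hV : V.toAddMonoidHom = permHom πV := eq_permHom fun i => by
    fin_cases i
    exacts [hV0, hV1, hV2, hV3, hV4]
  have hadm : ∀ θ : H →+ W, (Function.Surjective θ ∧ (∀ j, gen j ∉ θ.ker) ∧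
      θ.ker.map U.toAddMonoidHom = θ.ker ∧ θ.ker.map V.toAddMonoidHom = θ.ker) ↔
      IsAdmissible θ := fun θ => by
    rw [AddSubgroup.map_equiv_eq_self_iff, AddSubgroup.map_equiv_eq_self_iff, hU, hV]
    rfl
  refine ⟨fun θ => ?_, ?_⟩
  · rw [hadm, isAdmissible_iff, apply_gen_eq, exists_pattern_iff]
  · rw [← card_admissible_kernels]
    exact Nat.card_congr <| Equiv.subtypeEquivRight fun K => exists_congr fun θ => by
      rw [← hadm, and_assoc, and_assoc, and_assoc]

/-- Let `H = ⟨a_1,…,a_5⟩ ≅ (ℤ/2ℤ)⁵` with `a_6 := a_1+⋯+a_5`, and let `U, V`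
be the automorphisms of `H` given by the permutations `(a_3 a_5)(a_4 a_6)`
and `(a_1 a_2)(a_3 a_4)(a_5 a_6)`, generating `Q*`.  The surjective
homomorphisms `θ : H → (ℤ/2ℤ)²` with `a_j ∉ ker θ` for all `j = 1,…,6` and
`ker θ` invariant under `Q*` are exactly the maps whose values on
`(a_1,…,a_6)` are `(φ₁,φ₁,φ₂,φ₂,φ₂,φ₂)`, `(φ₁,φ₁,φ₂,φ₂,φ₁φ₂,φ₁φ₂)`,
`(φ₁,φ₁,φ₂,φ₁φ₂,φ₂,φ₁φ₂)` or `(φ₁,φ₁,φ₂,φ₁φ₂,φ₁φ₂,φ₂)` for a basis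
`φ₁, φ₂` of `(ℤ/2ℤ)²`; in particular there are exactly `4` such kernels. -/
theorem stmt19
    (a : Fin 6 → (Fin 5 → ZMod 2))
    (ha : ∀ j : Fin 5, a j.castSucc = Pi.single j 1)
    (hlast : a 5 = ∑ j : Fin 5, Pi.single j 1)
    (U V : (Fin 5 → ZMod 2) ≃+ (Fin 5 → ZMod 2))
    (hU0 : U (a 0) = a 0) (hU1 : U (a 1) = a 1)
    (hU2 : U (a 2) = a 4) (hU4 : U (a 4) = a 2)
    (hU3 : U (a 3) = a 5) (hU5 : U (a 5) = a 3)
    (hV0 : V (a 0) = a 1) (hV1 : V (a 1) = a 0)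
    (hV2 : V (a 2) = a 3) (hV3 : V (a 3) = a 2)
    (hV4 : V (a 4) = a 5) (hV5 : V (a 5) = a 4) :
    (∀ θ : (Fin 5 → ZMod 2) →+ (ZMod 2 × ZMod 2),
      (Function.Surjective θ ∧ (∀ j, a j ∉ θ.ker) ∧
        AddSubgroup.map U.toAddMonoidHom θ.ker = θ.ker ∧
        AddSubgroup.map V.toAddMonoidHom θ.ker = θ.ker) ↔
      (∃ φ₁ φ₂ : ZMod 2 × ZMod 2,
        AddSubgroup.closure {φ₁, φ₂} = (⊤ : AddSubgroup (ZMod 2 × ZMod 2)) ∧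
        ((fun j => θ (a j)) = ![φ₁, φ₁, φ₂, φ₂, φ₂, φ₂] ∨
         (fun j => θ (a j)) = ![φ₁, φ₁, φ₂, φ₂, φ₁ + φ₂, φ₁ + φ₂] ∨
         (fun j => θ (a j)) = ![φ₁, φ₁, φ₂, φ₁ + φ₂, φ₂, φ₁ + φ₂] ∨
         (fun j => θ (a j)) = ![φ₁, φ₁, φ₂, φ₁ + φ₂, φ₁ + φ₂, φ₂]))) ∧
    Nat.card {K : AddSubgroup (Fin 5 → ZMod 2) //
      ∃ θ : (Fin 5 → ZMod 2) →+ (ZMod 2 × ZMod 2),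
        Function.Surjective θ ∧ (∀ j, a j ∉ θ.ker) ∧
        AddSubgroup.map U.toAddMonoidHom θ.ker = θ.ker ∧
        AddSubgroup.map V.toAddMonoidHom θ.ker = θ.ker ∧ K = θ.ker} = 4 :=
  stmt19_general a ha hlast U V hU0 hU1 hU2 hU4 hU3 hV0 hV1 hV2 hV3 hV4
end
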